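/- arXiv:1803.10209 — 2 statements merged into one kernel-verified Lean document; each statement's English description precedes it below -/
import Mathlib

section
/- Let Q be a graph, k a field, and v ∈ Q0 a vertex that is either a sink or the base of a loop, with {v} a hereditary subset of Q0. Then the two-sided ideal I(v) of L_k(Q) generated by v equals the k-linear span of elements of the form x y*, where x, y are finite paths in Q both ending at v. -/
/-! The span `S` of the elements `x y*` (paths `x`, `y` ending at `v`) contains `v = v v*`, and
every `x y*` equals `x v y*`, so `S ⊆ I(v)`. For the converse it suffices that `S` is stable under
multiplication by the generators on either side. Vertices and edges just extend or kill `x` (on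
the left) or `y` (on the right), and `e* f = δ_{e,f} t(e)` cancels against the first edge of `x`
or of `y`. In the remaining products `e* v y*` and `x v f`, with `e`, `f` emitted by `v`, the edge
is a loop at `v` because `{v}` is hereditary, so it can be appended to `y` resp. `x`. -/

open scoped TensorProduct

noncomputable section

structure LGraph where
  V : Type
  E : Type
  s : E → V
  t : E → V

namespace Graph

/-- Generators of the Leavitt path algebra: vertices, edges, and ghost edges. -/
inductive LGen (Q : LGraph) : Type
  | vert : Q.V → LGen Q
  | edge : Q.E → LGen Q
  | ghost : Q.E → LGen Q

/-- The degree of a generator: vertices have degree 0, edges degree 1,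
ghost edges degree -1. -/
def gdeg {Q : LGraph} : LGen Q → ℤ
  | .vert _ => 0
  | .edge _ => 1
  | .ghost _ => -1

open LGen in
/-- The Leavitt path algebra relations (L1)-(L5). -/
inductive LeavittRel (k : Type) [CommRing k] (Q : LGraph) [DecidableEq Q.V] [DecidableEq Q.E] :
    FreeAlgebra k (LGen Q) → FreeAlgebra k (LGen Q) → Prop
  | vv (v w : Q.V) : LeavittRel k Q
      (FreeAlgebra.ι k (vert v) * FreeAlgebra.ι k (vert w))
      (if v = w then FreeAlgebra.ι k (vert v) else 0)
  | se (e : Q.E) : LeavittRel k Q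
      (FreeAlgebra.ι k (vert (Q.s e)) * FreeAlgebra.ι k (edge e)) (FreeAlgebra.ι k (edge e))
  | et (e : Q.E) : LeavittRel k Q
      (FreeAlgebra.ι k (edge e) * FreeAlgebra.ι k (vert (Q.t e))) (FreeAlgebra.ι k (edge e))
  | tg (e : Q.E) : LeavittRel k Q
      (FreeAlgebra.ι k (vert (Q.t e)) * FreeAlgebra.ι k (ghost e)) (FreeAlgebra.ι k (ghost e))
  | gs (e : Q.E) : LeavittRel k Q
      (FreeAlgebra.ι k (ghost e) * FreeAlgebra.ι k (vert (Q.s e))) (FreeAlgebra.ι k (ghost e))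
  | gf (e f : Q.E) : LeavittRel k Q
      (FreeAlgebra.ι k (ghost e) * FreeAlgebra.ι k (edge f))
      (if e = f then FreeAlgebra.ι k (vert (Q.t e)) else 0)
  | ck (v : Q.V) (h : {e : Q.E | Q.s e = v}.Finite) (hne : {e : Q.E | Q.s e = v}.Nonempty) :
      LeavittRel k Q
        (∑ e ∈ h.toFinset, FreeAlgebra.ι k (edge e) * FreeAlgebra.ι k (ghost e))
        (FreeAlgebra.ι k (vert v))

/-- The Leavitt path algebra of a graph `Q` over `k`. -/
abbrev LPA (k : Type) [CommRing k] (Q : LGraph) [DecidableEq Q.V] [DecidableEq Q.E] : Type :=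
  RingQuot (LeavittRel k Q)

variable (k : Type) [CommRing k] (Q : LGraph) [DecidableEq Q.V] [DecidableEq Q.E]

/-- The vertex generators of the Leavitt path algebra. -/
def Lvert (v : Q.V) : LPA k Q :=
  RingQuot.mkAlgHom k (LeavittRel k Q) (FreeAlgebra.ι k (.vert v))

/-- The edge generators of the Leavitt path algebra. -/
def Ledge (e : Q.E) : LPA k Q :=
  RingQuot.mkAlgHom k (LeavittRel k Q) (FreeAlgebra.ι k (.edge e))

/-- The ghost-edge generators of the Leavitt path algebra. -/
def Lghost (e : Q.E) : LPA k Q :=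
  RingQuot.mkAlgHom k (LeavittRel k Q) (FreeAlgebra.ι k (.ghost e))

/-- The `n`-th homogeneous component of the standard `ℤ`-grading of the Leavitt
path algebra: spanned by monomials in the generators of total degree `n`, where
edges have degree `1`, ghost edges degree `-1` and vertices degree `0`. -/
def homComp (n : ℤ) : Submodule k (LPA k Q) :=
  Submodule.span k { a : LPA k Q | ∃ l : List (LGen Q), (l.map gdeg).sum = n ∧
    a = RingQuot.mkAlgHom k (LeavittRel k Q) ((l.map (FreeAlgebra.ι k)).prod) }

/-- Paths in a graph, from a vertex to a vertex. -/
inductive GPath (Q : LGraph) : Q.V → Q.V → Type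
  | nil (v : Q.V) : GPath Q v v
  | cons (e : Q.E) {w : Q.V} (p : GPath Q (Q.t e) w) : GPath Q (Q.s e) w

/-- Length of a path. -/
def GPath.length {Q : LGraph} : ∀ {v w : Q.V}, GPath Q v w → ℕ
  | _, _, .nil _ => 0
  | _, _, .cons _ p => p.length + 1

/-- Concatenation of composable paths. -/
def GPath.comp {Q : LGraph} : ∀ {u v w : Q.V}, GPath Q u v → GPath Q v w → GPath Q u w
  | _, _, _, .nil _, q => q
  | _, _, _, .cons e p, q => .cons e (p.comp q)

/-- The element of the Leavitt path algebra corresponding to a path. -/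
def pathElem : ∀ {v w : Q.V}, GPath Q v w → LPA k Q
  | _, _, .nil v => Lvert k Q v
  | _, _, .cons e p => Ledge k Q e * pathElem p

/-- The element of the Leavitt path algebra corresponding to the reversed ghost path `y*`. -/
def ghostElem : ∀ {v w : Q.V}, GPath Q v w → LPA k Q
  | _, _, .nil v => Lvert k Q v
  | _, _, .cons e p => ghostElem p * Lghost k Q e

/-- The graph `Q \ {v₀}`: remove the vertex `v₀` and all edges ending at `v₀`.
This needs `{v₀}` to be hereditary, i.e. every edge emitted by `v₀` ends at `v₀`. -/
def deleteVertex (Q : LGraph) (v₀ : Q.V) (h : ∀ e, Q.s e = v₀ → Q.t e = v₀) : LGraph where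
  V := {v : Q.V // v ≠ v₀}
  E := {e : Q.E // Q.t e ≠ v₀}
  s e := ⟨Q.s e.1, fun hs => e.2 (h e.1 hs)⟩
  t e := ⟨Q.t e.1, e.2⟩

/-- The graph obtained by removing a single edge `x₀`. -/
def deleteEdge (Q : LGraph) (x₀ : Q.E) : LGraph where
  V := Q.V
  E := {e : Q.E // e ≠ x₀}
  s e := Q.s e.1
  t e := Q.t e.1


instance (Q : LGraph) [DecidableEq Q.V] (v₀ : Q.V) (h : ∀ e, Q.s e = v₀ → Q.t e = v₀) :
    DecidableEq (deleteVertex Q v₀ h).V :=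
  inferInstanceAs (DecidableEq {v : Q.V // v ≠ v₀})

instance (Q : LGraph) [DecidableEq Q.E] (v₀ : Q.V) (h : ∀ e, Q.s e = v₀ → Q.t e = v₀) :
    DecidableEq (deleteVertex Q v₀ h).E :=
  inferInstanceAs (DecidableEq {e : Q.E // Q.t e ≠ v₀})

instance (Q : LGraph) [DecidableEq Q.V] (x₀ : Q.E) : DecidableEq (deleteEdge Q x₀).V :=
  inferInstanceAs (DecidableEq Q.V)

instance (Q : LGraph) [DecidableEq Q.E] (x₀ : Q.E) : DecidableEq (deleteEdge Q x₀).E :=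
  inferInstanceAs (DecidableEq {e : Q.E // e ≠ x₀})

/-- A graph `Q` is `(Q', v₀)`-trimmable, where `Q'` is the subgraph obtained by removing
`v₀` and all edges ending in `v₀`: the only edge emitted by `v₀` is a loop `x₀` at `v₀`,
at least one other edge ends at `v₀`, and every vertex emitting an edge into `v₀`
also emits an edge ending inside `Q'`. -/
structure IsTrimmable (Q : LGraph) (v₀ : Q.V) (x₀ : Q.E) : Prop where
  loop_src : Q.s x₀ = v₀
  loop_tgt : Q.t x₀ = v₀
  only_out : ∀ e, Q.s e = v₀ → e = x₀
  exists_into : ∃ e, Q.t e = v₀ ∧ e ≠ x₀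
  no_new_sinks : ∀ e, Q.t e = v₀ → e ≠ x₀ → ∃ e', Q.s e' = Q.s e ∧ Q.t e' ≠ v₀

/-- In a trimmable graph, `{v₀}` is hereditary. -/
theorem IsTrimmable.her {Q : LGraph} {v₀ : Q.V} {x₀ : Q.E} (h : IsTrimmable Q v₀ x₀) :
    ∀ e, Q.s e = v₀ → Q.t e = v₀ := fun e hs => by rw [h.only_out e hs]; exact h.loop_tgt

/-- The `n`-th homogeneous component of `A ⊗ k[u,u⁻¹]` for the grading given by the
degree on the Laurent polynomial tensorand: elements of the form `a ⊗ uⁿ`. -/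
def tensorGrade (k A : Type) [CommRing k] [Ring A] [Algebra k A] (n : ℤ) :
    Submodule k (A ⊗[k] LaurentPolynomial k) :=
  LinearMap.range ((TensorProduct.mk k A (LaurentPolynomial k)).flip (LaurentPolynomial.T n))

theorem FreeAlgebra.mul_mem_of_forall_ι_mul_mem {R X A : Type*} [CommSemiring R] [Semiring A]
    [Algebra R A] {f : FreeAlgebra R X →ₐ[R] A} (hf : Function.Surjective f)
    {M : Submodule R A} (h : ∀ x, ∀ m ∈ M, f (FreeAlgebra.ι R x) * m ∈ M)
    (r : A) {m : A} (hm : m ∈ M) : r * m ∈ M := by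
  obtain ⟨r, rfl⟩ := hf r
  induction r using FreeAlgebra.induction generalizing m with
  | grade0 c => rw [AlgHom.commutes, ← Algebra.smul_def]; exact M.smul_mem c hm
  | grade1 x => exact h x m hm
  | mul p q hp hq => rw [map_mul, mul_assoc]; exact hp (hq hm)
  | add p q hp hq => rw [map_add, add_mul]; exact M.add_mem (hp hm) (hq hm)

theorem FreeAlgebra.mul_mem_of_forall_mul_ι_mem {R X A : Type*} [CommSemiring R] [Semiring A]
    [Algebra R A] {f : FreeAlgebra R X →ₐ[R] A} (hf : Function.Surjective f)
    {M : Submodule R A} (h : ∀ x, ∀ m ∈ M, m * f (FreeAlgebra.ι R x) ∈ M)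
    (r : A) {m : A} (hm : m ∈ M) : m * r ∈ M := by
  obtain ⟨r, rfl⟩ := hf r
  induction r using FreeAlgebra.induction generalizing m with
  | grade0 c =>
    rw [AlgHom.commutes, ← Algebra.commutes, ← Algebra.smul_def]
    exact M.smul_mem c hm
  | grade1 x => exact h x m hm
  | mul p q hp hq => rw [map_mul, ← mul_assoc]; exact hq (hp hm)
  | add p q hp hq => rw [map_add, mul_add]; exact M.add_mem (hp hm) (hq hm)

variable {k Q}

theorem Lvert_mul_Lvert (v w : Q.V) :
    Lvert k Q v * Lvert k Q w = if v = w then Lvert k Q v else 0 := by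
  rw [Lvert, Lvert, ← map_mul, RingQuot.mkAlgHom_rel k (LeavittRel.vv v w),
    apply_ite (RingQuot.mkAlgHom k (LeavittRel k Q)), map_zero]

theorem Lvert_mul_Lvert_self (v : Q.V) : Lvert k Q v * Lvert k Q v = Lvert k Q v := by
  rw [Lvert_mul_Lvert, if_pos rfl]

theorem Lvert_source_mul_Ledge (e : Q.E) : Lvert k Q (Q.s e) * Ledge k Q e = Ledge k Q e := by
  rw [Lvert, Ledge, ← map_mul, RingQuot.mkAlgHom_rel k (LeavittRel.se e)]

theorem Ledge_mul_Lvert_target (e : Q.E) : Ledge k Q e * Lvert k Q (Q.t e) = Ledge k Q e := by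
  rw [Lvert, Ledge, ← map_mul, RingQuot.mkAlgHom_rel k (LeavittRel.et e)]

theorem Lvert_target_mul_Lghost (e : Q.E) : Lvert k Q (Q.t e) * Lghost k Q e = Lghost k Q e := by
  rw [Lvert, Lghost, ← map_mul, RingQuot.mkAlgHom_rel k (LeavittRel.tg e)]

theorem Lghost_mul_Lvert_source (e : Q.E) : Lghost k Q e * Lvert k Q (Q.s e) = Lghost k Q e := by
  rw [Lvert, Lghost, ← map_mul, RingQuot.mkAlgHom_rel k (LeavittRel.gs e)]

theorem Lghost_mul_Ledge (e f : Q.E) :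
    Lghost k Q e * Ledge k Q f = if e = f then Lvert k Q (Q.t e) else 0 := by
  rw [Lghost, Ledge, ← map_mul, RingQuot.mkAlgHom_rel k (LeavittRel.gf e f),
    apply_ite (RingQuot.mkAlgHom k (LeavittRel k Q)), map_zero, Lvert]

theorem Lvert_mul_pathElem {a w : Q.V} (x : GPath Q a w) :
    Lvert k Q a * pathElem k Q x = pathElem k Q x := by
  cases x with
  | nil => exact Lvert_mul_Lvert_self _
  | cons e p => rw [pathElem, ← mul_assoc, Lvert_source_mul_Ledge]

theorem Lvert_mul_ghostElem {b w : Q.V} (y : GPath Q b w) :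
    Lvert k Q w * ghostElem k Q y = ghostElem k Q y := by
  induction y with
  | nil => exact Lvert_mul_Lvert_self _
  | cons e p ih => rw [ghostElem, ← mul_assoc, ih]

theorem ghostElem_mul_Lvert {b w : Q.V} (y : GPath Q b w) :
    ghostElem k Q y * Lvert k Q b = ghostElem k Q y := by
  cases y with
  | nil => exact Lvert_mul_Lvert_self _
  | cons e p => rw [ghostElem, mul_assoc, Lghost_mul_Lvert_source]

theorem ghostElem_comp {a b c : Q.V} (p : GPath Q a b) (q : GPath Q b c) :
    ghostElem k Q (p.comp q) = ghostElem k Q q * ghostElem k Q p := by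
  induction p with
  | nil => rw [GPath.comp, ghostElem, ghostElem_mul_Lvert]
  | cons e p ih => rw [GPath.comp, ghostElem, ghostElem, ih, mul_assoc]

theorem pathElem_comp {a b c : Q.V} (p : GPath Q a b) (q : GPath Q b c) :
    pathElem k Q (p.comp q) = pathElem k Q p * pathElem k Q q := by
  induction p with
  | nil => rw [GPath.comp, pathElem, Lvert_mul_pathElem]
  | cons e p ih => rw [GPath.comp, pathElem, pathElem, ih, mul_assoc]

theorem pathElem_mul_Lvert {a w : Q.V} (x : GPath Q a w) :
    pathElem k Q x * Lvert k Q w = pathElem k Q x := by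
  induction x with
  | nil => exact Lvert_mul_Lvert_self _
  | cons e p ih => rw [pathElem, mul_assoc, ih]

theorem Lvert_mul_Ledge_of_ne {w : Q.V} {e : Q.E} (h : w ≠ Q.s e) :
    Lvert k Q w * Ledge k Q e = 0 := by
  rw [← Lvert_source_mul_Ledge, ← mul_assoc, Lvert_mul_Lvert, if_neg h, zero_mul]

theorem Lghost_mul_Lvert_of_ne {e : Q.E} {w : Q.V} (h : Q.s e ≠ w) :
    Lghost k Q e * Lvert k Q w = 0 := by
  rw [← Lghost_mul_Lvert_source, mul_assoc, Lvert_mul_Lvert, if_neg h, mul_zero]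

theorem Lvert_mul_pathElem_of_ne {w a b : Q.V} (x : GPath Q a b) (h : w ≠ a) :
    Lvert k Q w * pathElem k Q x = 0 := by
  rw [← Lvert_mul_pathElem x, ← mul_assoc, Lvert_mul_Lvert, if_neg h, zero_mul]

theorem ghostElem_mul_Lvert_of_ne {w a b : Q.V} (y : GPath Q b a) (h : b ≠ w) :
    ghostElem k Q y * Lvert k Q w = 0 := by
  rw [← ghostElem_mul_Lvert y, mul_assoc, Lvert_mul_Lvert, if_neg h, mul_zero]

theorem exists_path_of_edge (e : Q.E) {a b : Q.V} (hs : Q.s e = a) (ht : Q.t e = b) :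
    ∃ q : GPath Q a b, pathElem k Q q = Ledge k Q e ∧ ghostElem k Q q = Lghost k Q e := by
  subst hs ht
  exact ⟨.cons e (.nil _), Ledge_mul_Lvert_target e, Lvert_target_mul_Lghost e⟩

variable (k) in
def pathSpan (v : Q.V) : Submodule k (LPA k Q) :=
  Submodule.span k {z | ∃ (a b : Q.V) (x : GPath Q a v) (y : GPath Q b v),
    z = pathElem k Q x * ghostElem k Q y}

section pathSpan

variable {v a b : Q.V} (x : GPath Q a v) (y : GPath Q b v)

theorem pathElem_mul_ghostElem_mem_pathSpan :
    pathElem k Q x * ghostElem k Q y ∈ pathSpan k v :=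
  Submodule.subset_span ⟨a, b, x, y, rfl⟩

theorem Lvert_mul_mem_pathSpan (w : Q.V) :
    Lvert k Q w * (pathElem k Q x * ghostElem k Q y) ∈ pathSpan k v := by
  by_cases h : w = a
  · subst h
    rw [← mul_assoc, Lvert_mul_pathElem]
    exact pathElem_mul_ghostElem_mem_pathSpan x y
  · rw [← mul_assoc, Lvert_mul_pathElem_of_ne x h, zero_mul]
    exact zero_mem _

theorem Ledge_mul_mem_pathSpan (e : Q.E) :
    Ledge k Q e * (pathElem k Q x * ghostElem k Q y) ∈ pathSpan k v := by
  by_cases h : Q.t e = a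
  · subst h
    rw [← mul_assoc]
    exact pathElem_mul_ghostElem_mem_pathSpan (.cons e x) y
  · rw [← mul_assoc, ← Ledge_mul_Lvert_target, mul_assoc (Ledge k Q e),
      Lvert_mul_pathElem_of_ne x h, mul_zero, zero_mul]
    exact zero_mem _

theorem Lghost_mul_mem_pathSpan (hher : ∀ e, Q.s e = v → Q.t e = v) (e : Q.E) :
    Lghost k Q e * (pathElem k Q x * ghostElem k Q y) ∈ pathSpan k v := by
  cases x with
  | nil =>
    by_cases h : Q.s e = v
    · obtain ⟨q, -, hq⟩ := exists_path_of_edge (k := k) e h (hher e h)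
      have hyq : Lghost k Q e * (Lvert k Q v * ghostElem k Q y) =
          pathElem k Q (.nil v) * ghostElem k Q (y.comp q) := by
        rw [pathElem, ghostElem_comp, ← mul_assoc (Lvert k Q v), Lvert_mul_ghostElem q, hq,
          Lvert_mul_ghostElem]
      rw [pathElem, hyq]
      exact pathElem_mul_ghostElem_mem_pathSpan _ _
    · rw [pathElem, ← mul_assoc, Lghost_mul_Lvert_of_ne h, zero_mul]
      exact zero_mem _
  | cons f p =>
    rw [pathElem, ← mul_assoc, ← mul_assoc, Lghost_mul_Ledge]
    split_ifs with h
    · subst h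
      rw [Lvert_mul_pathElem]
      exact pathElem_mul_ghostElem_mem_pathSpan p y
    · rw [zero_mul, zero_mul]
      exact zero_mem _

theorem mul_Lvert_mem_pathSpan (w : Q.V) :
    pathElem k Q x * ghostElem k Q y * Lvert k Q w ∈ pathSpan k v := by
  by_cases h : b = w
  · subst h
    rw [mul_assoc, ghostElem_mul_Lvert]
    exact pathElem_mul_ghostElem_mem_pathSpan x y
  · rw [mul_assoc, ghostElem_mul_Lvert_of_ne y h, mul_zero]
    exact zero_mem _

theorem mul_Lghost_mem_pathSpan (e : Q.E) :
    pathElem k Q x * ghostElem k Q y * Lghost k Q e ∈ pathSpan k v := by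
  by_cases h : b = Q.t e
  · subst h
    rw [mul_assoc]
    exact pathElem_mul_ghostElem_mem_pathSpan x (.cons e y)
  · rw [mul_assoc, ← Lvert_target_mul_Lghost, ← mul_assoc (ghostElem k Q y),
      ghostElem_mul_Lvert_of_ne y h, zero_mul, mul_zero]
    exact zero_mem _

theorem mul_Ledge_mem_pathSpan (hher : ∀ e, Q.s e = v → Q.t e = v) (f : Q.E) :
    pathElem k Q x * ghostElem k Q y * Ledge k Q f ∈ pathSpan k v := by
  cases y with
  | nil =>
    by_cases h : Q.s f = v
    · obtain ⟨q, hq, -⟩ := exists_path_of_edge (k := k) f h (hher f h)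
      have hxq : pathElem k Q x * Lvert k Q v * Ledge k Q f =
          pathElem k Q (x.comp q) * ghostElem k Q (.nil v) := by
        rw [ghostElem, pathElem_comp, mul_assoc (pathElem k Q x) (pathElem k Q q),
          pathElem_mul_Lvert q, hq, pathElem_mul_Lvert]
      rw [ghostElem, hxq]
      exact pathElem_mul_ghostElem_mem_pathSpan _ _
    · rw [ghostElem, mul_assoc, Lvert_mul_Ledge_of_ne (Ne.symm h), mul_zero]
      exact zero_mem _
  | cons g p =>
    rw [ghostElem, mul_assoc, mul_assoc, Lghost_mul_Ledge]
    split_ifs with h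
    · subst h
      rw [ghostElem_mul_Lvert]
      exact pathElem_mul_ghostElem_mem_pathSpan x p
    · rw [mul_zero, mul_zero]
      exact zero_mem _

end pathSpan

theorem Lvert_mem_pathSpan (v : Q.V) : Lvert k Q v ∈ pathSpan k v := by
  simpa only [pathElem, ghostElem, Lvert_mul_Lvert_self] using
    pathElem_mul_ghostElem_mem_pathSpan (k := k) (.nil v) (.nil v)

section hereditary

variable {v : Q.V} (hher : ∀ e, Q.s e = v → Q.t e = v)
include hher

theorem mkAlgHom_ι_mul_mem_pathSpan (g : LGen Q) {m : LPA k Q} (hm : m ∈ pathSpan k v) :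
    RingQuot.mkAlgHom k (LeavittRel k Q) (FreeAlgebra.ι k g) * m ∈ pathSpan k v := by
  refine (Submodule.span_le (p := (pathSpan k v).comap (LinearMap.mulLeft k _))).mpr ?_ hm
  rintro _ ⟨a, b, x, y, rfl⟩
  cases g with
  | vert w => exact Lvert_mul_mem_pathSpan x y w
  | edge e => exact Ledge_mul_mem_pathSpan x y e
  | ghost e => exact Lghost_mul_mem_pathSpan x y hher e

theorem mem_pathSpan_mul_mkAlgHom_ι (g : LGen Q) {m : LPA k Q} (hm : m ∈ pathSpan k v) :
    m * RingQuot.mkAlgHom k (LeavittRel k Q) (FreeAlgebra.ι k g) ∈ pathSpan k v := by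
  refine (Submodule.span_le (p := (pathSpan k v).comap (LinearMap.mulRight k _))).mpr ?_ hm
  rintro _ ⟨a, b, x, y, rfl⟩
  cases g with
  | vert w => exact mul_Lvert_mem_pathSpan x y w
  | edge f => exact mul_Ledge_mem_pathSpan x y hher f
  | ghost e => exact mul_Lghost_mem_pathSpan x y e

variable (k) in
def pathIdeal : TwoSidedIdeal (LPA k Q) :=
  .mk' (pathSpan k v) (zero_mem _) add_mem neg_mem
    (FreeAlgebra.mul_mem_of_forall_ι_mul_mem (RingQuot.mkAlgHom_surjective k _)
      (fun g _ => mkAlgHom_ι_mul_mem_pathSpan hher g) _)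
    (FreeAlgebra.mul_mem_of_forall_mul_ι_mem (RingQuot.mkAlgHom_surjective k _)
      (fun g _ => mem_pathSpan_mul_mkAlgHom_ι hher g) _)

theorem mem_pathIdeal {z : LPA k Q} : z ∈ pathIdeal k hher ↔ z ∈ pathSpan k v :=
  TwoSidedIdeal.mem_mk' ..

end hereditary

theorem pathElem_mul_ghostElem_mem_span_Lvert {v a b : Q.V} (x : GPath Q a v) (y : GPath Q b v) :
    pathElem k Q x * ghostElem k Q y ∈ TwoSidedIdeal.span {Lvert k Q v} := by
  rw [← Lvert_mul_ghostElem y]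
  exact TwoSidedIdeal.mul_mem_left _ _ _
    (TwoSidedIdeal.mul_mem_right _ _ _ (TwoSidedIdeal.subset_span rfl))

theorem ideal_of_hereditary_vertex_general (k : Type) [Field k] (Q : LGraph)
    [DecidableEq Q.V] [DecidableEq Q.E] (v : Q.V)
    (hher : ∀ e, Q.s e = v → Q.t e = v) :
    ((TwoSidedIdeal.span {Lvert k Q v} : TwoSidedIdeal (LPA k Q)) : Set (LPA k Q)) =
      (Submodule.span k
        {z : LPA k Q | ∃ (a b : Q.V) (x : GPath Q a v) (y : GPath Q b v),
          z = pathElem k Q x * ghostElem k Q y} : Set (LPA k Q)) := by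
  refine subset_antisymm ?_ ?_
  · have hle : TwoSidedIdeal.span {Lvert k Q v} ≤ pathIdeal k hher :=
      TwoSidedIdeal.span_le.mpr <|
        Set.singleton_subset_iff.mpr ((mem_pathIdeal hher).mpr (Lvert_mem_pathSpan v))
    exact fun z hz => (mem_pathIdeal hher).mp (hle hz)
  · have hle : pathSpan k v ≤ (TwoSidedIdeal.span {Lvert k Q v}).asIdeal.restrictScalars k :=
      Submodule.span_le.mpr fun _ ⟨_, _, x, y, hz⟩ =>
        hz ▸ pathElem_mul_ghostElem_mem_span_Lvert x y
    exact hle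

/-- For a vertex `v` that is a sink or the base of a loop, with `{v}` hereditary,
the two-sided ideal `I(v)` of `L_k(Q)` generated by `v` equals the `k`-linear span of
the elements `x y*` where `x`, `y` are finite paths both ending at `v`. -/
theorem ideal_of_hereditary_vertex (k : Type) [Field k] (Q : LGraph)
    [DecidableEq Q.V] [DecidableEq Q.E] (v : Q.V)
    (hher : ∀ e, Q.s e = v → Q.t e = v)
    (hsink_or_loop : (∀ e, Q.s e ≠ v) ∨ ∃ e, Q.s e = v ∧ Q.t e = v) :
    ((TwoSidedIdeal.span {Lvert k Q v} : TwoSidedIdeal (LPA k Q)) : Set (LPA k Q)) =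
      (Submodule.span k
        {z : LPA k Q | ∃ (a b : Q.V) (x : GPath Q a v) (y : GPath Q b v),
          z = pathElem k Q x * ghostElem k Q y} : Set (LPA k Q)) :=
  ideal_of_hereditary_vertex_general k Q v hher

end Graph
end
end

section
/- Let Q be a (Q',v0)-trimmable graph over a field k. Then the assignment π1 sending each generator α ∈ Q'_0 ∪ Q'_1 ∪ (Q'_1)* of L_k(Q) to itself in L_k(Q'), and all other generators (v0, edges into v0, and their ghost edges) to 0, extends to a well-defined surjective Z-graded algebra homomorphism π1 : L_k(Q) → L_k(Q'). -/
open scoped TensorProduct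

noncomputable section

structure QGraph where
  V : Type
  E : Type
  s : E → V
  t : E → V

namespace QGraph

/-- Generators of the Leavitt path algebra: vertices, edges, and ghost edges. -/
inductive LGen (Q : QGraph) : Type
  | vert : Q.V → LGen Q
  | edge : Q.E → LGen Q
  | ghost : Q.E → LGen Q

/-- The degree of a generator: vertices have degree 0, edges degree 1,
ghost edges degree -1. -/
def gdeg {Q : QGraph} : LGen Q → ℤ
  | .vert _ => 0
  | .edge _ => 1
  | .ghost _ => -1

open LGen in
/-- The Leavitt path algebra relations (L1)-(L5). -/
inductive LeavittRel (k : Type) [CommRing k] (Q : QGraph) [DecidableEq Q.V] [DecidableEq Q.E] :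
    FreeAlgebra k (LGen Q) → FreeAlgebra k (LGen Q) → Prop
  | vv (v w : Q.V) : LeavittRel k Q
      (FreeAlgebra.ι k (vert v) * FreeAlgebra.ι k (vert w))
      (if v = w then FreeAlgebra.ι k (vert v) else 0)
  | se (e : Q.E) : LeavittRel k Q
      (FreeAlgebra.ι k (vert (Q.s e)) * FreeAlgebra.ι k (edge e)) (FreeAlgebra.ι k (edge e))
  | et (e : Q.E) : LeavittRel k Q
      (FreeAlgebra.ι k (edge e) * FreeAlgebra.ι k (vert (Q.t e))) (FreeAlgebra.ι k (edge e))
  | tg (e : Q.E) : LeavittRel k Q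
      (FreeAlgebra.ι k (vert (Q.t e)) * FreeAlgebra.ι k (ghost e)) (FreeAlgebra.ι k (ghost e))
  | gs (e : Q.E) : LeavittRel k Q
      (FreeAlgebra.ι k (ghost e) * FreeAlgebra.ι k (vert (Q.s e))) (FreeAlgebra.ι k (ghost e))
  | gf (e f : Q.E) : LeavittRel k Q
      (FreeAlgebra.ι k (ghost e) * FreeAlgebra.ι k (edge f))
      (if e = f then FreeAlgebra.ι k (vert (Q.t e)) else 0)
  | ck (v : Q.V) (h : {e : Q.E | Q.s e = v}.Finite) (hne : {e : Q.E | Q.s e = v}.Nonempty) :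
      LeavittRel k Q
        (∑ e ∈ h.toFinset, FreeAlgebra.ι k (edge e) * FreeAlgebra.ι k (ghost e))
        (FreeAlgebra.ι k (vert v))

/-- The Leavitt path algebra of a graph `Q` over `k`. -/
abbrev LPA (k : Type) [CommRing k] (Q : QGraph) [DecidableEq Q.V] [DecidableEq Q.E] : Type :=
  RingQuot (LeavittRel k Q)

variable (k : Type) [CommRing k] (Q : QGraph) [DecidableEq Q.V] [DecidableEq Q.E]

/-- The vertex generators of the Leavitt path algebra. -/
def Lvert (v : Q.V) : LPA k Q :=
  RingQuot.mkAlgHom k (LeavittRel k Q) (FreeAlgebra.ι k (.vert v))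

/-- The edge generators of the Leavitt path algebra. -/
def Ledge (e : Q.E) : LPA k Q :=
  RingQuot.mkAlgHom k (LeavittRel k Q) (FreeAlgebra.ι k (.edge e))

/-- The ghost-edge generators of the Leavitt path algebra. -/
def Lghost (e : Q.E) : LPA k Q :=
  RingQuot.mkAlgHom k (LeavittRel k Q) (FreeAlgebra.ι k (.ghost e))

/-- The `n`-th homogeneous component of the standard `ℤ`-grading of the Leavitt
path algebra: spanned by monomials in the generators of total degree `n`, where
edges have degree `1`, ghost edges degree `-1` and vertices degree `0`. -/
def homComp (n : ℤ) : Submodule k (LPA k Q) :=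
  Submodule.span k { a : LPA k Q | ∃ l : List (LGen Q), (l.map gdeg).sum = n ∧
    a = RingQuot.mkAlgHom k (LeavittRel k Q) ((l.map (FreeAlgebra.ι k)).prod) }

/-- Paths in a graph, from a vertex to a vertex. -/
inductive GPath (Q : QGraph) : Q.V → Q.V → Type
  | nil (v : Q.V) : GPath Q v v
  | cons (e : Q.E) {w : Q.V} (p : GPath Q (Q.t e) w) : GPath Q (Q.s e) w

/-- Length of a path. -/
def GPath.length {Q : QGraph} : ∀ {v w : Q.V}, GPath Q v w → ℕ
  | _, _, .nil _ => 0
  | _, _, .cons _ p => p.length + 1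

/-- Concatenation of composable paths. -/
def GPath.comp {Q : QGraph} : ∀ {u v w : Q.V}, GPath Q u v → GPath Q v w → GPath Q u w
  | _, _, _, .nil _, q => q
  | _, _, _, .cons e p, q => .cons e (p.comp q)

/-- The element of the Leavitt path algebra corresponding to a path. -/
def pathElem : ∀ {v w : Q.V}, GPath Q v w → LPA k Q
  | _, _, .nil v => Lvert k Q v
  | _, _, .cons e p => Ledge k Q e * pathElem p

/-- The element of the Leavitt path algebra corresponding to the reversed ghost path `y*`. -/
def ghostElem : ∀ {v w : Q.V}, GPath Q v w → LPA k Q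
  | _, _, .nil v => Lvert k Q v
  | _, _, .cons e p => ghostElem p * Lghost k Q e

/-- The graph `Q \ {v₀}`: remove the vertex `v₀` and all edges ending at `v₀`.
This needs `{v₀}` to be hereditary, i.e. every edge emitted by `v₀` ends at `v₀`. -/
def deleteVertex (Q : QGraph) (v₀ : Q.V) (h : ∀ e, Q.s e = v₀ → Q.t e = v₀) : QGraph where
  V := {v : Q.V // v ≠ v₀}
  E := {e : Q.E // Q.t e ≠ v₀}
  s e := ⟨Q.s e.1, fun hs => e.2 (h e.1 hs)⟩
  t e := ⟨Q.t e.1, e.2⟩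

/-- The graph obtained by removing a single edge `x₀`. -/
def deleteEdge (Q : QGraph) (x₀ : Q.E) : QGraph where
  V := Q.V
  E := {e : Q.E // e ≠ x₀}
  s e := Q.s e.1
  t e := Q.t e.1


instance (Q : QGraph) [DecidableEq Q.V] (v₀ : Q.V) (h : ∀ e, Q.s e = v₀ → Q.t e = v₀) :
    DecidableEq (Q.deleteVertex v₀ h).V :=
  inferInstanceAs (DecidableEq {v : Q.V // v ≠ v₀})

instance (Q : QGraph) [DecidableEq Q.E] (v₀ : Q.V) (h : ∀ e, Q.s e = v₀ → Q.t e = v₀) :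
    DecidableEq (Q.deleteVertex v₀ h).E :=
  inferInstanceAs (DecidableEq {e : Q.E // Q.t e ≠ v₀})

instance (Q : QGraph) [DecidableEq Q.V] (x₀ : Q.E) : DecidableEq (Q.deleteEdge x₀).V :=
  inferInstanceAs (DecidableEq Q.V)

instance (Q : QGraph) [DecidableEq Q.E] (x₀ : Q.E) : DecidableEq (Q.deleteEdge x₀).E :=
  inferInstanceAs (DecidableEq {e : Q.E // e ≠ x₀})

/-- A graph `Q` is `(Q', v₀)`-trimmable, where `Q'` is the subgraph obtained by removing
`v₀` and all edges ending in `v₀`: the only edge emitted by `v₀` is a loop `x₀` at `v₀`,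
at least one other edge ends at `v₀`, and every vertex emitting an edge into `v₀`
also emits an edge ending inside `Q'`. -/
structure IsTrimmable (Q : QGraph) (v₀ : Q.V) (x₀ : Q.E) : Prop where
  loop_src : Q.s x₀ = v₀
  loop_tgt : Q.t x₀ = v₀
  only_out : ∀ e, Q.s e = v₀ → e = x₀
  exists_into : ∃ e, Q.t e = v₀ ∧ e ≠ x₀
  no_new_sinks : ∀ e, Q.t e = v₀ → e ≠ x₀ → ∃ e', Q.s e' = Q.s e ∧ Q.t e' ≠ v₀

/-- In a trimmable graph, `{v₀}` is hereditary. -/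
theorem IsTrimmable.her {Q : QGraph} {v₀ : Q.V} {x₀ : Q.E} (h : IsTrimmable Q v₀ x₀) :
    ∀ e, Q.s e = v₀ → Q.t e = v₀ := fun e hs => by rw [h.only_out e hs]; exact h.loop_tgt

/-- The `n`-th homogeneous component of `A ⊗ k[u,u⁻¹]` for the grading given by the
degree on the Laurent polynomial tensorand: elements of the form `a ⊗ uⁿ`. -/
def tensorGrade (k A : Type) [CommRing k] [Ring A] [Algebra k A] (n : ℤ) :
    Submodule k (A ⊗[k] LaurentPolynomial k) :=
  LinearMap.range ((TensorProduct.mk k A (LaurentPolynomial k)).flip (LaurentPolynomial.T n))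

end QGraph

/-! Since every edge leaving `v₀` ends at `v₀`, each of the relations `vv`, `se`, `et`, `tg`,
`gs`, `gf` either involves a generator sent to `0`, and then both sides go to `0`, or is mapped to
the same relation of `Q'`. The Cuntz–Krieger sum at `v ≠ v₀` loses only the terms of edges into
`v₀`, which are sent to `0`, and what remains is the Cuntz–Krieger relation of `Q'` at `v`:
trimmability guarantees that `v` still emits an edge in `Q'`. Every generator goes to `0` or to
a generator of the same degree, which gives surjectivity and compatibility with the grading. -/

namespace QGraph

section DeleteVertex

variable {Q : QGraph} (v₀ : Q.V) (hher : ∀ e, Q.s e = v₀ → Q.t e = v₀)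

@[simp]
theorem deleteVertex_s (e : Q.E) (he : Q.t e ≠ v₀) :
    (Q.deleteVertex v₀ hher).s ⟨e, he⟩ = ⟨Q.s e, fun h => he (hher e h)⟩ := rfl

@[simp]
theorem deleteVertex_t (e : Q.E) (he : Q.t e ≠ v₀) :
    (Q.deleteVertex v₀ hher).t ⟨e, he⟩ = ⟨Q.t e, he⟩ := rfl

-- Stated at the type `(Q.deleteVertex v₀ hher).V` rather than at the underlying subtype:
-- `simp` does not unfold `deleteVertex` to match `Subtype.mk.injEq`.
@[simp]
theorem deleteVertex_vert_mk_inj {v w : Q.V} (hv : v ≠ v₀) (hw : w ≠ v₀) :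
    @Eq (Q.deleteVertex v₀ hher).V ⟨v, hv⟩ ⟨w, hw⟩ ↔ v = w :=
  Subtype.mk_eq_mk

@[simp]
theorem deleteVertex_edge_mk_inj {e e' : Q.E} (he : Q.t e ≠ v₀) (he' : Q.t e' ≠ v₀) :
    @Eq (Q.deleteVertex v₀ hher).E ⟨e, he⟩ ⟨e', he'⟩ ↔ e = e' :=
  Subtype.mk_eq_mk

end DeleteVertex

theorem IsTrimmable.exists_edge_of_target_eq {Q : QGraph} {v₀ : Q.V} {x₀ : Q.E}
    (hT : IsTrimmable Q v₀ x₀) (e : Q.E) (he : Q.t e = v₀) (hs : Q.s e ≠ v₀) :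
    ∃ e', Q.s e' = Q.s e ∧ Q.t e' ≠ v₀ :=
  hT.no_new_sinks e he fun hx => hs (hx ▸ hT.loop_src)

variable (k : Type) [CommRing k]

section UniversalProperty

variable (Q : QGraph) [DecidableEq Q.V] [DecidableEq Q.E]

def gen (g : LGen Q) : LPA k Q :=
  RingQuot.mkAlgHom k (LeavittRel k Q) (FreeAlgebra.ι k g)

variable {Q} in
structure IsLeavittFamily {A : Type*} [Semiring A] (f : LGen Q → A) : Prop where
  vert_mul_vert : ∀ v w, f (.vert v) * f (.vert w) = if v = w then f (.vert v) else 0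
  vert_mul_edge : ∀ e, f (.vert (Q.s e)) * f (.edge e) = f (.edge e)
  edge_mul_vert : ∀ e, f (.edge e) * f (.vert (Q.t e)) = f (.edge e)
  vert_mul_ghost : ∀ e, f (.vert (Q.t e)) * f (.ghost e) = f (.ghost e)
  ghost_mul_vert : ∀ e, f (.ghost e) * f (.vert (Q.s e)) = f (.ghost e)
  ghost_mul_edge : ∀ e e', f (.ghost e) * f (.edge e') = if e = e' then f (.vert (Q.t e)) else 0
  sum_edge_mul_ghost : ∀ v (h : {e | Q.s e = v}.Finite), {e | Q.s e = v}.Nonempty →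
    ∑ e ∈ h.toFinset, f (.edge e) * f (.ghost e) = f (.vert v)

theorem isLeavittFamily_gen : IsLeavittFamily (gen k Q) where
  vert_mul_vert v w := by
    simpa [gen, apply_ite] using RingQuot.mkAlgHom_rel k (LeavittRel.vv (k := k) v w)
  vert_mul_edge e := by simpa [gen] using RingQuot.mkAlgHom_rel k (LeavittRel.se (k := k) e)
  edge_mul_vert e := by simpa [gen] using RingQuot.mkAlgHom_rel k (LeavittRel.et (k := k) e)
  vert_mul_ghost e := by simpa [gen] using RingQuot.mkAlgHom_rel k (LeavittRel.tg (k := k) e)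
  ghost_mul_vert e := by simpa [gen] using RingQuot.mkAlgHom_rel k (LeavittRel.gs (k := k) e)
  ghost_mul_edge e e' := by
    simpa [gen, apply_ite] using RingQuot.mkAlgHom_rel k (LeavittRel.gf (k := k) e e')
  sum_edge_mul_ghost v h hne := by
    simpa [gen] using RingQuot.mkAlgHom_rel k (LeavittRel.ck (k := k) v h hne)

namespace IsLeavittFamily

variable {Q} {A : Type*} [Semiring A] [Algebra k A] {f : LGen Q → A}

theorem lift_eq_of_leavittRel (hf : IsLeavittFamily f) ⦃a b : FreeAlgebra k (LGen Q)⦄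
    (h : LeavittRel k Q a b) : FreeAlgebra.lift k f a = FreeAlgebra.lift k f b := by
  induction h with
  | vv v w => simpa [apply_ite] using hf.vert_mul_vert v w
  | se e => simpa using hf.vert_mul_edge e
  | et e => simpa using hf.edge_mul_vert e
  | tg e => simpa using hf.vert_mul_ghost e
  | gs e => simpa using hf.ghost_mul_vert e
  | gf e e' => simpa [apply_ite] using hf.ghost_mul_edge e e'
  | ck v h hne => simpa using hf.sum_edge_mul_ghost v h hne

def liftAlgHom (hf : IsLeavittFamily f) : LPA k Q →ₐ[k] A :=
  RingQuot.liftAlgHom k ⟨FreeAlgebra.lift k f, hf.lift_eq_of_leavittRel k⟩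

@[simp]
theorem liftAlgHom_gen (hf : IsLeavittFamily f) (g : LGen Q) :
    hf.liftAlgHom k (gen k Q g) = f g := by
  simp [liftAlgHom, gen]

end IsLeavittFamily

end UniversalProperty

section GeneratorImages

variable {Q : QGraph} [DecidableEq Q.V] [DecidableEq Q.E] {A : Type*} [Semiring A] [Algebra k A]

theorem surjective_of_gen_mem_range (φ : A →ₐ[k] LPA k Q) (h : ∀ g, gen k Q g ∈ φ.range) :
    Function.Surjective φ := by
  intro y
  obtain ⟨z, rfl⟩ := RingQuot.mkAlgHom_surjective k (LeavittRel k Q) y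
  have hle : Algebra.adjoin k (Set.range (FreeAlgebra.ι k)) ≤
      φ.range.comap (RingQuot.mkAlgHom k (LeavittRel k Q)) :=
    Algebra.adjoin_le (Set.range_subset_iff.2 h)
  rw [FreeAlgebra.adjoin_range_ι] at hle
  exact hle Algebra.mem_top

variable {Q' : QGraph} [DecidableEq Q'.V] [DecidableEq Q'.E]

theorem map_monomial_eq_zero_or_monomial (φ : LPA k Q →ₐ[k] LPA k Q')
    (hφ : ∀ g, φ (gen k Q g) = 0 ∨ ∃ g', gdeg g' = gdeg g ∧ φ (gen k Q g) = gen k Q' g')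
    (l : List (LGen Q)) :
    φ (RingQuot.mkAlgHom k (LeavittRel k Q) (l.map (FreeAlgebra.ι k)).prod) = 0 ∨
      ∃ l' : List (LGen Q'), (l'.map gdeg).sum = (l.map gdeg).sum ∧
        φ (RingQuot.mkAlgHom k (LeavittRel k Q) (l.map (FreeAlgebra.ι k)).prod) =
          RingQuot.mkAlgHom k (LeavittRel k Q') (l'.map (FreeAlgebra.ι k)).prod := by
  induction l with
  | nil => exact .inr ⟨[], rfl, by simp⟩
  | cons g l ih =>
    have hcons :
        φ (RingQuot.mkAlgHom k (LeavittRel k Q) ((g :: l).map (FreeAlgebra.ι k)).prod) =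
          φ (gen k Q g) *
            φ (RingQuot.mkAlgHom k (LeavittRel k Q) (l.map (FreeAlgebra.ι k)).prod) := by
      simp [gen]
    rw [hcons]
    rcases hφ g with hg | ⟨g', hdeg, hg⟩
    · exact .inl (by rw [hg, zero_mul])
    rcases ih with hl | ⟨l', hdeg', hl⟩
    · exact .inl (by rw [hl, mul_zero])
    exact .inr ⟨g' :: l', by simp [hdeg, hdeg'], by rw [hg, hl]; simp [gen]⟩

theorem map_mem_homComp (φ : LPA k Q →ₐ[k] LPA k Q')
    (hφ : ∀ g, φ (gen k Q g) = 0 ∨ ∃ g', gdeg g' = gdeg g ∧ φ (gen k Q g) = gen k Q' g')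
    {n : ℤ} {a : LPA k Q} (ha : a ∈ homComp k Q n) : φ a ∈ homComp k Q' n := by
  induction ha using Submodule.span_induction with
  | mem x hx =>
    obtain ⟨l, hdeg, rfl⟩ := hx
    rcases map_monomial_eq_zero_or_monomial k φ hφ l with h0 | ⟨l', hdeg', hl'⟩
    · rw [h0]; exact zero_mem _
    · rw [hl']; exact Submodule.subset_span ⟨l', hdeg'.trans hdeg, rfl⟩
  | zero => simp
  | add x y _ _ hx hy => simpa using add_mem hx hy
  | smul c x _ hx => simpa using Submodule.smul_mem _ c hx

end GeneratorImages

section Trim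

variable {Q : QGraph} [DecidableEq Q.V] [DecidableEq Q.E] (v₀ : Q.V)
  (hher : ∀ e, Q.s e = v₀ → Q.t e = v₀)

def trimGen : LGen Q → LPA k (Q.deleteVertex v₀ hher)
  | .vert v => if hv : v = v₀ then 0 else gen k _ (.vert ⟨v, hv⟩)
  | .edge e => if he : Q.t e = v₀ then 0 else gen k _ (.edge ⟨e, he⟩)
  | .ghost e => if he : Q.t e = v₀ then 0 else gen k _ (.ghost ⟨e, he⟩)

theorem trimGen_eq_zero_or_gen (g : LGen Q) :
    trimGen k v₀ hher g = 0 ∨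
      ∃ g', gdeg g' = gdeg g ∧ trimGen k v₀ hher g = gen k _ g' := by
  cases g with
  | vert v =>
    by_cases hv : v = v₀
    · exact .inl (dif_pos hv)
    · exact .inr ⟨.vert ⟨v, hv⟩, rfl, dif_neg hv⟩
  | edge e =>
    by_cases he : Q.t e = v₀
    · exact .inl (dif_pos he)
    · exact .inr ⟨.edge ⟨e, he⟩, rfl, dif_neg he⟩
  | ghost e =>
    by_cases he : Q.t e = v₀
    · exact .inl (dif_pos he)
    · exact .inr ⟨.ghost ⟨e, he⟩, rfl, dif_neg he⟩

theorem sum_trimGen_edge_mul_ghost (hsink : ∀ e, Q.t e = v₀ → Q.s e ≠ v₀ →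
      ∃ e', Q.s e' = Q.s e ∧ Q.t e' ≠ v₀)
    (v : Q.V) (hv : v ≠ v₀) (h : {e | Q.s e = v}.Finite) (hne : {e | Q.s e = v}.Nonempty) :
    ∑ e ∈ h.toFinset, trimGen k v₀ hher (.edge e) * trimGen k v₀ hher (.ghost e) =
      gen k (Q.deleteVertex v₀ hher) (.vert ⟨v, hv⟩) := by
  let val : (Q.deleteVertex v₀ hher).E → Q.E := Subtype.val
  have hval : Function.Injective val := Subtype.val_injective
  have hfin' : {e' | (Q.deleteVertex v₀ hher).s e' = ⟨v, hv⟩}.Finite :=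
    (h.preimage hval.injOn).subset fun e' he' => congrArg Subtype.val he'
  have hne' : {e' | (Q.deleteVertex v₀ hher).s e' = ⟨v, hv⟩}.Nonempty := by
    obtain ⟨e, rfl⟩ := hne
    by_cases hte : Q.t e = v₀
    · obtain ⟨e', hs, ht⟩ := hsink e hte hv
      exact ⟨⟨e', ht⟩, Subtype.ext hs⟩
    · exact ⟨⟨e, hte⟩, rfl⟩
  calc ∑ e ∈ h.toFinset, trimGen k v₀ hher (.edge e) * trimGen k v₀ hher (.ghost e)
      = ∑ e' ∈ h.toFinset.preimage val hval.injOn,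
          trimGen k v₀ hher (.edge e'.1) * trimGen k v₀ hher (.ghost e'.1) := by
        refine (Finset.sum_preimage val _ _ _ fun e _ he => ?_).symm
        have hte : Q.t e = v₀ := by_contra fun hte => he ⟨⟨e, hte⟩, rfl⟩
        simp [trimGen, hte]
    _ = ∑ e' ∈ hfin'.toFinset,
          gen k (Q.deleteVertex v₀ hher) (.edge e') *
            gen k (Q.deleteVertex v₀ hher) (.ghost e') := by
        refine Finset.sum_congr ?_ fun e' _ => by simp only [trimGen, dif_neg e'.2]; rfl
        ext e'
        rw [Finset.mem_preimage, Set.Finite.mem_toFinset, Set.Finite.mem_toFinset]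
        exact (Subtype.ext_iff (a1 := (Q.deleteVertex v₀ hher).s e') (a2 := ⟨v, hv⟩)).symm
    _ = gen k (Q.deleteVertex v₀ hher) (.vert ⟨v, hv⟩) :=
        (isLeavittFamily_gen k _).sum_edge_mul_ghost _ hfin' hne'

theorem isLeavittFamily_trimGen (hsink : ∀ e, Q.t e = v₀ → Q.s e ≠ v₀ →
      ∃ e', Q.s e' = Q.s e ∧ Q.t e' ≠ v₀) :
    IsLeavittFamily (trimGen k v₀ hher) := by
  have hQ' := isLeavittFamily_gen k (Q.deleteVertex v₀ hher)
  constructor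
  case vert_mul_vert =>
    intro v w
    by_cases hv : v = v₀
    · subst hv; simp [trimGen]
    by_cases hw : w = v₀
    · subst hw; simp [trimGen, hv]
    simpa [trimGen, hv, hw] using hQ'.vert_mul_vert ⟨v, hv⟩ ⟨w, hw⟩
  case vert_mul_edge =>
    intro e
    by_cases he : Q.t e = v₀
    · simp [trimGen, he]
    have hs : Q.s e ≠ v₀ := fun h => he (hher e h)
    simpa [trimGen, he, hs] using hQ'.vert_mul_edge ⟨e, he⟩
  case edge_mul_vert =>
    intro e
    by_cases he : Q.t e = v₀
    · simp [trimGen, he]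
    simpa [trimGen, he] using hQ'.edge_mul_vert ⟨e, he⟩
  case vert_mul_ghost =>
    intro e
    by_cases he : Q.t e = v₀
    · simp [trimGen, he]
    simpa [trimGen, he] using hQ'.vert_mul_ghost ⟨e, he⟩
  case ghost_mul_vert =>
    intro e
    by_cases he : Q.t e = v₀
    · simp [trimGen, he]
    have hs : Q.s e ≠ v₀ := fun h => he (hher e h)
    simpa [trimGen, he, hs] using hQ'.ghost_mul_vert ⟨e, he⟩
  case ghost_mul_edge =>
    intro e e'
    by_cases he : Q.t e = v₀
    · simp [trimGen, he]
    by_cases he' : Q.t e' = v₀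
    · have hne : e ≠ e' := by rintro rfl; exact he he'
      simp [trimGen, he', hne]
    simpa [trimGen, he, he'] using hQ'.ghost_mul_edge ⟨e, he⟩ ⟨e', he'⟩
  case sum_edge_mul_ghost =>
    intro v h hne
    by_cases hv : v = v₀
    · subst hv
      refine (Finset.sum_eq_zero fun e he => ?_).trans (by simp [trimGen])
      simp [trimGen, hher e (by simpa using he)]
    simpa [trimGen, hv] using sum_trimGen_edge_mul_ghost k v₀ hher hsink v hv h hne

def trimHom (hsink : ∀ e, Q.t e = v₀ → Q.s e ≠ v₀ →
      ∃ e', Q.s e' = Q.s e ∧ Q.t e' ≠ v₀) :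
    LPA k Q →ₐ[k] LPA k (Q.deleteVertex v₀ hher) :=
  (isLeavittFamily_trimGen k v₀ hher hsink).liftAlgHom k

@[simp]
theorem trimHom_gen (hsink : ∀ e, Q.t e = v₀ → Q.s e ≠ v₀ →
      ∃ e', Q.s e' = Q.s e ∧ Q.t e' ≠ v₀) (g : LGen Q) : trimHom k v₀ hher hsink (gen k Q g) = trimGen k v₀ hher g :=
  IsLeavittFamily.liftAlgHom_gen k _ g

end Trim

/-- For a `(Q',v₀)`-trimmable graph `Q` (where `Q' = Q \ {v₀}`), the assignment sending
the generators coming from `Q'` to themselves and all other generators (`v₀`, edges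
into `v₀`, and their ghost edges) to `0` extends to a well-defined surjective
`ℤ`-graded algebra homomorphism `π₁ : L_k(Q) → L_k(Q')`. -/
theorem _root_.Graph.exists_pi1 (k : Type) [Field k] (Q : QGraph)
    [DecidableEq Q.V] [DecidableEq Q.E] [Fintype Q.V] [Fintype Q.E]
    (v₀ : Q.V) (x₀ : Q.E) (hT : IsTrimmable Q v₀ x₀) :
    ∃ π₁ : LPA k Q →ₐ[k] LPA k (Q.deleteVertex v₀ hT.her),
      (∀ (v : Q.V) (hv : v ≠ v₀),
        π₁ (Lvert k Q v) = Lvert k (Q.deleteVertex v₀ hT.her) ⟨v, hv⟩) ∧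
      π₁ (Lvert k Q v₀) = 0 ∧
      (∀ (e : Q.E) (he : Q.t e ≠ v₀),
        π₁ (Ledge k Q e) = Ledge k (Q.deleteVertex v₀ hT.her) ⟨e, he⟩) ∧
      (∀ e : Q.E, Q.t e = v₀ → π₁ (Ledge k Q e) = 0) ∧
      (∀ (e : Q.E) (he : Q.t e ≠ v₀),
        π₁ (Lghost k Q e) = Lghost k (Q.deleteVertex v₀ hT.her) ⟨e, he⟩) ∧
      (∀ e : Q.E, Q.t e = v₀ → π₁ (Lghost k Q e) = 0) ∧
      Function.Surjective π₁ ∧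
      (∀ n : ℤ, ∀ a ∈ homComp k Q n, π₁ a ∈ homComp k (Q.deleteVertex v₀ hT.her) n) := by
  set π₁ := trimHom k v₀ hT.her hT.exists_edge_of_target_eq
  have hπ₁ (g : LGen Q) : π₁ (gen k Q g) = trimGen k v₀ hT.her g := trimHom_gen k v₀ _ _ g
  have hsurj : Function.Surjective π₁ := by
    refine surjective_of_gen_mem_range k π₁ fun g => ?_
    cases g with
    | vert v => exact ⟨Lvert k Q v.1, (hπ₁ _).trans (dif_neg v.2)⟩
    | edge e => exact ⟨Ledge k Q e.1, (hπ₁ _).trans (dif_neg e.2)⟩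
    | ghost e => exact ⟨Lghost k Q e.1, (hπ₁ _).trans (dif_neg e.2)⟩
  have hgrade (n : ℤ) (a : LPA k Q) (ha : a ∈ homComp k Q n) :
      π₁ a ∈ homComp k (Q.deleteVertex v₀ hT.her) n :=
    map_mem_homComp k π₁ (by simpa only [hπ₁] using trimGen_eq_zero_or_gen k v₀ hT.her) ha
  exact ⟨π₁, fun v hv => (hπ₁ _).trans (dif_neg hv), (hπ₁ _).trans (dif_pos rfl),
    fun e he => (hπ₁ _).trans (dif_neg he), fun e he => (hπ₁ _).trans (dif_pos he),
    fun e he => (hπ₁ _).trans (dif_neg he), fun e he => (hπ₁ _).trans (dif_pos he),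
    hsurj, hgrade⟩

end QGraph
end
end
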